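/- arXiv:1309.6477 — 2 statements merged into one kernel-verified Lean document; each statement's English description precedes it below -/
import Mathlib

section
/- Let p ≥ 2 be an integer, (a,b) ⊆ (0,1) an interval with 1/(p+1) ≤ a < 1/p < b such that 1/p is the only point of the form 1/l (l ≥ 2 an integer) contained in (a,b), and let k ≥ p. Then the competitive ratio of DH_k restricted to input sequences with all item sizes in (a,b) equals (p² + 1)/(p(p+1)). -/
open Filter MeasureTheory

/-- A valid bin covering input: all item sizes lie strictly between 0 and 1. -/
def validInput (I : List ℝ) : Prop := ∀ x ∈ I, 0 < x ∧ x < 1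

/-- The total volume (sum of item sizes) of an input sequence. -/
def vol (I : List ℝ) : ℝ := I.sum

/-- One step of Dual Next-Fit: the state is the level of the open bin (0 if none)
together with the number of covered (closed) bins so far. -/
noncomputable def dnfStep (s : ℝ × ℕ) (x : ℝ) : ℝ × ℕ :=
  if 1 ≤ s.1 + x then (0, s.2 + 1) else (s.1 + x, s.2)

/-- The number of bins covered by Dual Next-Fit on input `I`. -/
noncomputable def dnfCount (I : List ℝ) : ℕ := (I.foldl dnfStep (0, 0)).2

/-- The number of bins covered by the Dual Harmonic algorithm `DH_k` on input `I`:
items in `[1/j, 1/(j-1))` (for `2 ≤ j ≤ k`) are packed `j` to a bin, and items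
in `(0, 1/k)` are packed in Next-Fit fashion in separate bins. -/
noncomputable def dhCount (k : ℕ) (I : List ℝ) : ℕ :=
  (∑ j ∈ Finset.Icc 2 k,
      (I.countP fun x => decide ((1:ℝ)/(j:ℝ) ≤ x ∧ x < 1/((j:ℝ)-1))) / j)
  + dnfCount (I.filter fun x => decide (x < 1/(k:ℝ)))

/-- The optimal (offline) number of covered bins: the maximum, over all assignments
of the items of `I` to bins, of the number of bins receiving total size at least 1. -/
noncomputable def optCount (I : List ℝ) : ℕ :=
  Finset.sup Finset.univ (fun f : Fin I.length → Fin I.length =>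
    (Finset.univ.filter fun b : Fin I.length =>
      1 ≤ ∑ i ∈ Finset.univ.filter (fun i => f i = b), I.get i).card)

/-- The competitive ratio of the algorithm `A` restricted to input sequences with
all item sizes in `S`: the supremum of all `c` such that for some constant `b`,
`A I ≥ c·Opt I + b` for all such inputs. -/
noncomputable def CRrestricted (S : Set ℝ) (A : List ℝ → ℕ) : ℝ :=
  sSup {c : ℝ | ∃ b : ℝ, ∀ I : List ℝ, (∀ x ∈ I, x ∈ S) →
    c * (optCount I : ℝ) + b ≤ (A I : ℝ)}

/-- `A`'s performance on a worst permutation of `I`. -/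
noncomputable def worstOf (A : List ℝ → ℕ) (I : List ℝ) : ℕ :=
  (I.permutations.map A).foldr min (A I)

/-- The expected performance of `A` on a uniformly random permutation of `I`. -/
noncomputable def expPerm (A : List ℝ → ℕ) (I : List ℝ) : ℝ :=
  (∑ σ : Equiv.Perm (Fin I.length), (A (List.ofFn fun i => I.get (σ i)) : ℝ)) /
    ((I.length).factorial : ℝ)

/-- `liminf_{v→∞} inf { A(I)/v : vol I = v, items of I in S }`. -/
noncomputable def minRate (S : Set ℝ) (A : List ℝ → ℕ) : ℝ :=
  Filter.liminf (fun v : ℝ =>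
    sInf {r : ℝ | ∃ I : List ℝ, (∀ x ∈ I, x ∈ S) ∧ vol I = v ∧ r = (A I : ℝ) / v})
    Filter.atTop

/-- Expected performance of `A` on `n` items drawn independently and uniformly from `(0,1)`. -/
noncomputable def unifE (A : List ℝ → ℕ) (n : ℕ) : ℝ :=
  ∫ x : Fin n → ℝ, (A (List.ofFn x) : ℝ)
    ∂(Measure.pi fun _ : Fin n => volume.restrict (Set.Ioo (0:ℝ) 1))

/-- Expected performance of `A` on `n` independent items, each of size `ε` with
probability 1/2 and size `1-ε` with probability 1/2. -/
noncomputable def bernE (A : List ℝ → ℕ) (n : ℕ) (ε : ℝ) : ℝ :=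
  (∑ f : Fin n → Bool, (A (List.ofFn fun i => if f i then ε else 1 - ε) : ℝ)) / 2^n

/-- One step of a reasonable online algorithm with decision function `f`:
the accumulator records (history of items seen, levels of the open bins, number of
covered bins).  On item `x`, the algorithm places `x` in the open bin of index
`f hist x` (a new bin is opened if the index is out of range); a bin is closed
exactly when its content reaches 1. -/
noncomputable def algStep (f : List ℝ → ℝ → ℕ) (acc : List ℝ × List ℝ × ℕ) (x : ℝ) :
    List ℝ × List ℝ × ℕ :=
  let hist := acc.1
  let s := acc.2.1
  let c := acc.2.2
  let i := f hist x
  if h : i < s.length then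
    if 1 ≤ s.get ⟨i, h⟩ + x then (hist ++ [x], s.eraseIdx i, c + 1)
    else (hist ++ [x], s.set i (s.get ⟨i, h⟩ + x), c)
  else
    if 1 ≤ x then (hist ++ [x], s, c + 1)
    else (hist ++ [x], s ++ [x], c)

/-- Running the reasonable online algorithm with decision function `f` on input `I`. -/
noncomputable def runAlg (f : List ℝ → ℝ → ℕ) (I : List ℝ) : List ℝ × List ℝ × ℕ :=
  I.foldl (algStep f) ([], [], 0)

/-!
Every item of `(a, b)` lies in `(1/(p+1), 1/(p-1))`, because `1/(p-1)` is excluded from `(a, b)`.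
So `DH_k` packs the items of size at least `1/p` exactly `p` to a bin and the smaller ones
exactly `p + 1` to a bin. Give weight `p + 1` to the items of size at least `1/p` and weight `p`
to the smaller ones: a covered bin needs more than `p` items if all are small, and at least `p`
items otherwise, so it weighs at least `p² + 1`. Comparing the total weight with what `DH_k`
covers gives the ratio `(p² + 1)/(p(p + 1))` up to an additive constant. It is tight on `m`
copies of a bin made of one item just above `1/p` and `p - 1` items just below `1/p`: the
optimum covers `m` bins, while `DH_k` covers only `m/p + m(p - 1)/(p + 1)`.
-/

open Set

theorem CRrestricted_eq_of_bounds {S : Set ℝ} {A : List ℝ → ℕ} {r : ℝ} (hr : 0 ≤ r)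
    (hbound : ∃ b : ℝ, ∀ I : List ℝ, (∀ x ∈ I, x ∈ S) → r * optCount I + b ≤ A I)
    (htight : ∀ m : ℕ,
      ∃ I : List ℝ, (∀ x ∈ I, x ∈ S) ∧ m ≤ optCount I ∧ (A I : ℝ) ≤ r * m) :
    CRrestricted S A = r := by
  refine IsGreatest.csSup_eq ⟨hbound, fun c ⟨b, hb⟩ => ?_⟩
  by_contra! hc
  obtain ⟨m, hm⟩ := exists_nat_gt (-b / (c - r))
  obtain ⟨I, hIS, hmI, hAI⟩ := htight m
  have hopt : c * m ≤ c * optCount I :=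
    mul_le_mul_of_nonneg_left (by exact_mod_cast hmI) (by linarith)
  rw [div_lt_iff₀ (by linarith)] at hm
  linarith [hb I hIS]

section Assignment

variable {β : Type*} [Fintype β] [DecidableEq β]

noncomputable def coveredBins (I : List ℝ) (f : Fin I.length → β) : Finset β :=
  Finset.univ.filter fun c => 1 ≤ ∑ i ∈ Finset.univ.filter (fun i => f i = c), I.get i

theorem card_coveredBins_le_optCount (I : List ℝ) (f : Fin I.length → β)
    (hβ : Fintype.card β ≤ I.length) : (coveredBins I f).card ≤ optCount I := by
  obtain ⟨e⟩ := Function.Embedding.nonempty_of_card_le (β := Fin I.length) (by simpa using hβ)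
  calc (coveredBins I f).card = ((coveredBins I f).map e).card := (Finset.card_map e).symm
    _ ≤ (coveredBins I (e ∘ f)).card := by
        refine Finset.card_le_card fun c hc => ?_
        obtain ⟨c, hc, rfl⟩ := Finset.mem_map.1 hc
        simpa [coveredBins, e.injective.eq_iff] using hc
    _ ≤ optCount I := Finset.le_sup (f := fun g => (coveredBins I g).card) (Finset.mem_univ _)

end Assignment

theorem exists_card_coveredBins_eq_optCount (I : List ℝ) :
    ∃ f : Fin I.length → Fin I.length, (coveredBins I f).card = optCount I := by
  obtain ⟨f, -, hf⟩ := Finset.exists_mem_eq_sup Finset.univ ⟨id, Finset.mem_univ _⟩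
    fun f : Fin I.length → Fin I.length => (coveredBins I f).card
  exact ⟨f, hf.symm⟩

theorem one_le_optCount (I : List ℝ) (h : 1 ≤ I.sum) : 1 ≤ optCount I := by
  have hI : I ≠ [] := by rintro rfl; norm_num at h
  calc 1 = (coveredBins I fun _ => ()).card := by simp [coveredBins, h]
    _ ≤ optCount I := card_coveredBins_le_optCount I _ (List.length_pos_iff.2 hI)

theorem optCount_add_optCount_le_optCount_append (I J : List ℝ) :
    optCount I + optCount J ≤ optCount (I ++ J) := by
  obtain ⟨f, hf⟩ := exists_card_coveredBins_eq_optCount I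
  obtain ⟨g, hg⟩ := exists_card_coveredBins_eq_optCount J
  let e : Fin (I ++ J).length ≃ Fin I.length ⊕ Fin J.length :=
    (finCongr List.length_append).trans finSumFinEquiv.symm
  have hget : ∀ u, (I ++ J).get (e.symm u) = Sum.elim I.get J.get u := by
    rintro (i | j)
    · simp [e, List.getElem_append_left]
    · simp [e, List.getElem_append_right]
  have hcov : coveredBins (I ++ J) (Sum.map f g ∘ e)
      = (coveredBins I f).disjSum (coveredBins J g) := by
    ext c
    have hsum : ∑ i ∈ Finset.univ.filter (fun i => Sum.map f g (e i) = c), (I ++ J).get i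
        = ∑ u ∈ Finset.univ.filter (fun u => Sum.map f g u = c), Sum.elim I.get J.get u := by
      simp only [Finset.sum_filter]
      exact Fintype.sum_equiv e _ _ fun i => by rw [← hget, e.symm_apply_apply]
    simp only [coveredBins, Finset.mem_filter, Finset.mem_univ, true_and, Function.comp_apply,
      hsum]
    rcases c with c | c <;> simp [Finset.sum_filter, Fintype.sum_sum_type]
  calc optCount I + optCount J = (coveredBins (I ++ J) (Sum.map f g ∘ e)).card := by
        rw [hcov, Finset.card_disjSum, hf, hg]
    _ ≤ optCount (I ++ J) := card_coveredBins_le_optCount _ _ (by simp)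

theorem le_optCount_flatten_replicate (m : ℕ) {B : List ℝ} (hB : 1 ≤ B.sum) :
    m ≤ optCount (List.replicate m B).flatten := by
  induction m with
  | zero => exact Nat.zero_le _
  | succ m ih =>
    rw [List.replicate_succ, List.flatten_cons]
    linarith [one_le_optCount B hB,
      optCount_add_optCount_le_optCount_append B (List.replicate m B).flatten]

theorem one_lt_card_mul_of_one_le_sum {ι : Type*} {T : Finset ι} {x : ι → ℝ} {u : ℝ}
    (hx : ∀ i ∈ T, x i < u) (hT : 1 ≤ ∑ i ∈ T, x i) : 1 < T.card * u := by
  have hne : T.Nonempty := Finset.nonempty_iff_ne_empty.2 fun h => by simp [h] at hT; linarith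
  calc 1 ≤ ∑ i ∈ T, x i := hT
    _ < ∑ _i ∈ T, u := Finset.sum_lt_sum_of_nonempty hne hx
    _ = T.card * u := by rw [Finset.sum_const, nsmul_eq_mul]

section Harmonic

variable {p k : ℕ}

noncomputable def harmonicWeight (p : ℕ) (x : ℝ) : ℕ :=
  p + if 1 / (p : ℝ) ≤ x then 1 else 0

theorem sq_add_one_le_sum_harmonicWeight (hp : 2 ≤ p) {ι : Type*} {T : Finset ι}
    {x : ι → ℝ} (hx : ∀ i ∈ T, x i < 1 / ((p : ℝ) - 1)) (hT : 1 ≤ ∑ i ∈ T, x i) :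
    p ^ 2 + 1 ≤ ∑ i ∈ T, harmonicWeight p (x i) := by
  classical
  have hp1 : (0 : ℝ) < p - 1 := by
    have : (2 : ℝ) ≤ p := by exact_mod_cast hp
    linarith
  have hsum : ∑ i ∈ T, harmonicWeight p (x i)
      = p * T.card + (T.filter fun i => 1 / (p : ℝ) ≤ x i).card := by
    simp [harmonicWeight, Finset.sum_add_distrib, mul_comm]
  rw [hsum]
  rcases Finset.eq_empty_or_nonempty (T.filter fun i => 1 / (p : ℝ) ≤ x i) with hL | hL
  · -- only small items: more than `p` of them are needed
    have hsmall : ∀ i ∈ T, x i < 1 / p := fun i hi => by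
      by_contra! h
      exact Finset.eq_empty_iff_forall_notMem.1 hL i (Finset.mem_filter.2 ⟨hi, h⟩)
    have h := one_lt_card_mul_of_one_le_sum hsmall hT
    rw [mul_one_div, one_lt_div (by positivity)] at h
    have : p + 1 ≤ T.card := by exact_mod_cast h
    nlinarith
  · -- at least `p` items are needed, one of them large
    have h := one_lt_card_mul_of_one_le_sum hx hT
    rw [mul_one_div, one_lt_div hp1, sub_lt_iff_lt_add] at h
    have : p < T.card + 1 := by exact_mod_cast h
    have := hL.card_pos
    nlinarith

theorem sq_add_one_mul_optCount_le (hp : 2 ≤ p) {I : List ℝ}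
    (hI : ∀ x ∈ I, x < 1 / ((p : ℝ) - 1)) :
    (p ^ 2 + 1) * optCount I ≤ (I.map (harmonicWeight p)).sum := by
  obtain ⟨f, hf⟩ := exists_card_coveredBins_eq_optCount I
  calc (p ^ 2 + 1) * optCount I
      = ∑ c ∈ coveredBins I f, (p ^ 2 + 1) := by
        rw [← hf, Finset.sum_const, smul_eq_mul, mul_comm]
    _ ≤ ∑ c ∈ coveredBins I f,
          ∑ i ∈ Finset.univ.filter (fun i => f i = c), harmonicWeight p (I.get i) :=
        Finset.sum_le_sum fun c hc => sq_add_one_le_sum_harmonicWeight hp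
          (fun i _ => hI _ (List.get_mem _ _)) (Finset.mem_filter.1 hc).2
    _ ≤ ∑ c, ∑ i ∈ Finset.univ.filter (fun i => f i = c), harmonicWeight p (I.get i) :=
        Finset.sum_le_sum_of_subset (Finset.subset_univ _)
    _ = (I.map (harmonicWeight p)).sum := by
        rw [Finset.sum_fiberwise]
        simp

theorem sum_map_harmonicWeight (I : List ℝ) :
    (I.map (harmonicWeight p)).sum = p * I.length + I.countP (fun x => 1 / (p : ℝ) ≤ x) := by
  induction I with
  | nil => simp
  | cons x I ih =>
    simp only [List.map_cons, List.sum_cons, ih, List.length_cons, List.countP_cons,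
      harmonicWeight]
    by_cases h : 1 / (p : ℝ) ≤ x <;>
      simp only [h, decide_true, decide_false, if_true, if_false, Bool.false_eq_true] <;> ring

theorem one_le_sum_add_of_length_eq {J : List ℝ} {x : ℝ}
    (hJ : ∀ y ∈ J, 1 / ((p : ℝ) + 1) < y) (hx : 1 / ((p : ℝ) + 1) < x)
    (hlen : J.length = p) :
    1 ≤ J.sum + x := by
  have hJsum : J.length • (1 / ((p : ℝ) + 1)) ≤ J.sum :=
    List.card_nsmul_le_sum _ _ fun y hy => (hJ y hy).le
  have : (p : ℝ) * (1 / (p + 1)) + 1 / (p + 1) = 1 := by field_simp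
  rw [hlen, nsmul_eq_mul] at hJsum
  linarith

theorem sum_add_lt_one_of_length_lt {J : List ℝ} {x : ℝ} (hJ : ∀ y ∈ J, y < 1 / (p : ℝ))
    (hx : x < 1 / (p : ℝ)) (hlen : J.length < p) : J.sum + x < 1 := by
  have hJsum : J.sum ≤ J.length • (1 / (p : ℝ)) :=
    List.sum_le_card_nsmul _ _ fun y hy => (hJ y hy).le
  have hle : ((J.length : ℝ) + 1) * (1 / p) ≤ 1 := by
    rw [mul_one_div, div_le_one (by exact_mod_cast (Nat.zero_lt_of_lt hlen))]
    exact_mod_cast hlen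
  rw [nsmul_eq_mul] at hJsum
  linarith

theorem foldl_dnfStep_snd {I J : List ℝ} {c : ℕ}
    (hI : ∀ x ∈ I, x ∈ Ioo (1 / ((p : ℝ) + 1)) (1 / p))
    (hJ : ∀ x ∈ J, x ∈ Ioo (1 / ((p : ℝ) + 1)) (1 / p)) (hJp : J.length ≤ p) :
    (I.foldl dnfStep (J.sum, c)).2 = c + (J.length + I.length) / (p + 1) := by
  induction I generalizing J c with
  | nil => simp [Nat.div_eq_of_lt (Nat.lt_succ_of_le hJp)]
  | cons x I ih =>
    have hx := hI x List.mem_cons_self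
    have hI' := fun y hy => hI y (List.mem_cons_of_mem x hy)
    rcases hJp.eq_or_lt with hJp | hJp
    · have hcover := one_le_sum_add_of_length_eq (fun y hy => (hJ y hy).1) hx.1 hJp
      rw [List.foldl_cons, dnfStep, if_pos hcover, ← List.sum_nil,
        ih hI' (by simp) (Nat.zero_le _)]
      simp only [List.length_nil, List.length_cons, hJp, zero_add]
      rw [show p + (I.length + 1) = I.length + (p + 1) by ring, Nat.add_div_right _ p.succ_pos]
      ring
    · have hopen := sum_add_lt_one_of_length_lt (fun y hy => (hJ y hy).2) hx.2 hJp
      have hJx : ∀ y ∈ J ++ [x], y ∈ Ioo (1 / ((p : ℝ) + 1)) (1 / p) := by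
        simp only [List.mem_append, List.mem_singleton]
        rintro y (hy | rfl)
        exacts [hJ y hy, hx]
      have hsum : J.sum + x = (J ++ [x]).sum := by simp
      rw [List.foldl_cons, dnfStep, if_neg hopen.not_ge, hsum, ih hI' hJx (by simpa using hJp)]
      simp only [List.length_append, List.length_cons, List.length_nil]
      ring_nf

theorem dnfCount_eq {I : List ℝ} (hI : ∀ x ∈ I, x ∈ Ioo (1 / ((p : ℝ) + 1)) (1 / p)) :
    dnfCount I = I.length / (p + 1) := by
  simpa [dnfCount] using foldl_dnfStep_snd (J := []) (c := 0) hI (by simp) (Nat.zero_le p)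

theorem eq_or_eq_succ_of_mem_harmonicClass {j : ℕ} {x : ℝ} (hj : 2 ≤ j)
    (hx : x ∈ Ioo (1 / ((p : ℝ) + 1)) (1 / ((p : ℝ) - 1)))
    (hjx₁ : 1 / (j : ℝ) ≤ x) (hjx₂ : x < 1 / ((j : ℝ) - 1)) : j = p ∨ j = p + 1 := by
  have hp1 : 0 < (p : ℝ) - 1 := by
    have : (0 : ℝ) < 1 / ((p : ℝ) + 1) := by positivity
    exact one_div_pos.1 ((this.trans hx.1).trans hx.2)
  have hj1 : 0 < (j : ℝ) - 1 := by
    have : (2 : ℝ) ≤ j := by exact_mod_cast hj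
    linarith
  have h₁ : (p : ℝ) - 1 < j := (one_div_lt_one_div (by linarith) hp1).1 (hjx₁.trans_lt hx.2)
  have h₂ : (j : ℝ) - 1 < p + 1 :=
    (one_div_lt_one_div (by positivity) hj1).1 (hx.1.trans hjx₂)
  have h₁' : p < j + 1 := by exact_mod_cast (sub_lt_iff_lt_add.1 h₁)
  have h₂' : j < p + 2 := by
    have : (j : ℝ) < p + 2 := by linarith
    exact_mod_cast this
  omega

theorem countP_harmonicClass_eq_zero {j : ℕ} {I : List ℝ} (hj : 2 ≤ j) (hjp : j ≠ p)
    (hjp1 : j ≠ p + 1) (hI : ∀ x ∈ I, x ∈ Ioo (1 / ((p : ℝ) + 1)) (1 / ((p : ℝ) - 1))) :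
    I.countP (fun x => 1 / (j : ℝ) ≤ x ∧ x < 1 / ((j : ℝ) - 1)) = 0 := by
  refine List.countP_eq_zero.2 fun x hx hjx => ?_
  rw [decide_eq_true_eq] at hjx
  rcases eq_or_eq_succ_of_mem_harmonicClass hj (hI x hx) hjx.1 hjx.2 with h | h <;> contradiction

theorem dhCount_eq (hp : 2 ≤ p) (hk : p ≤ k) {I : List ℝ}
    (hI : ∀ x ∈ I, x ∈ Ioo (1 / ((p : ℝ) + 1)) (1 / ((p : ℝ) - 1))) :
    dhCount k I = I.countP (fun x => 1 / (p : ℝ) ≤ x) / p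
      + I.countP (fun x => x < 1 / (p : ℝ)) / (p + 1) := by
  have hlarge : I.countP (fun x => 1 / (p : ℝ) ≤ x ∧ x < 1 / ((p : ℝ) - 1))
      = I.countP (fun x => 1 / (p : ℝ) ≤ x) :=
    List.countP_congr fun x hx => by
      rw [decide_eq_true_eq, decide_eq_true_eq]
      exact and_iff_left (hI x hx).2
  have hlow : ∀ x ∈ I, 1 / ((p : ℝ) + 1) < x := fun x hx => (hI x hx).1
  rcases hk.eq_or_lt with rfl | hk
  · have hdnf : dnfCount (I.filter fun x => x < 1 / (p : ℝ))
        = I.countP (fun x => x < 1 / (p : ℝ)) / (p + 1) := by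
      rw [dnfCount_eq, List.countP_eq_length_filter]
      intro x hx
      rw [List.mem_filter, decide_eq_true_eq] at hx
      exact ⟨hlow x hx.1, hx.2⟩
    rw [dhCount, hdnf, Finset.sum_eq_single_of_mem p (by simp [hp]) fun j hj hjp => by
      rw [Finset.mem_Icc] at hj
      rw [countP_harmonicClass_eq_zero hj.1 hjp (by omega) hI, Nat.zero_div], hlarge]
  · have hsmall : I.countP
          (fun x => 1 / ((p + 1 : ℕ) : ℝ) ≤ x ∧ x < 1 / (((p + 1 : ℕ) : ℝ) - 1))
        = I.countP (fun x => x < 1 / (p : ℝ)) :=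
      List.countP_congr fun x hx => by
        simp only [decide_eq_true_eq, Nat.cast_add, Nat.cast_one, add_sub_cancel_right]
        exact and_iff_right (hlow x hx).le
    have hdnf : I.filter (fun x => x < 1 / (k : ℝ)) = [] := by
      refine List.filter_eq_nil_iff.2 fun x hx => ?_
      have hk' : (p : ℝ) + 1 ≤ k := by exact_mod_cast hk
      have : 1 / (k : ℝ) ≤ 1 / ((p : ℝ) + 1) := one_div_le_one_div_of_le (by positivity) hk'
      simpa using this.trans (hlow x hx).le
    rw [dhCount, hdnf, ← Finset.sum_subset (s₁ := {p, p + 1}) (by intro j; simp; omega)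
      fun j hj hjp => by
        rw [Finset.mem_Icc] at hj
        simp only [Finset.mem_insert, Finset.mem_singleton, not_or] at hjp
        rw [countP_harmonicClass_eq_zero hj.1 hjp.1 hjp.2 hI, Nat.zero_div],
      Finset.sum_pair (by omega), hlarge, hsmall]
    rfl

theorem sub_one_lt_cast_nat_div (m n : ℕ) : (m : ℝ) / n - 1 < ((m / n : ℕ) : ℝ) := by
  rw [← Nat.floor_div_eq_div (K := ℝ)]
  exact Nat.sub_one_lt_floor _

theorem mul_optCount_sub_two_le_dhCount (hp : 2 ≤ p) (hk : p ≤ k) {I : List ℝ}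
    (hI : ∀ x ∈ I, x ∈ Ioo (1 / ((p : ℝ) + 1)) (1 / ((p : ℝ) - 1))) :
    ((p : ℝ) ^ 2 + 1) / ((p : ℝ) * ((p : ℝ) + 1)) * optCount I - 2 ≤ dhCount k I := by
  set nL := I.countP (fun x => 1 / (p : ℝ) ≤ x)
  set nS := I.countP (fun x => x < 1 / (p : ℝ))
  have hlen : I.length = nL + nS := by
    rw [I.length_eq_countP_add_countP (fun x => 1 / (p : ℝ) ≤ x)]
    congr 1
    exact List.countP_congr fun x _ => by simp
  have hopt : ((p : ℝ) ^ 2 + 1) * optCount I ≤ p * (nL + nS) + nL := by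
    have := sq_add_one_mul_optCount_le hp fun x hx => (hI x hx).2
    rw [sum_map_harmonicWeight, hlen] at this
    exact_mod_cast this
  have hp0 : (0 : ℝ) < p := by positivity
  calc ((p : ℝ) ^ 2 + 1) / ((p : ℝ) * ((p : ℝ) + 1)) * optCount I - 2
      = ((p : ℝ) ^ 2 + 1) * optCount I / ((p : ℝ) * ((p : ℝ) + 1)) - 2 := by ring
    _ ≤ (p * (nL + nS) + nL) / ((p : ℝ) * ((p : ℝ) + 1)) - 2 := by gcongr
    _ = ((nL : ℝ) / p - 1) + ((nS : ℝ) / (p + 1) - 1) := by field_simp; ring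
    _ ≤ dhCount k I := by
        rw [dhCount_eq hp hk hI]
        push_cast
        gcongr
        · exact (sub_one_lt_cast_nat_div nL p).le
        · exact_mod_cast (sub_one_lt_cast_nat_div nS (p + 1)).le

theorem forall_mem_flatten_replicate {α : Type*} {P : α → Prop} {L s : α} (hL : P L) (hs : P s)
    (m n : ℕ) :
    ∀ x ∈ (List.replicate m (L :: List.replicate n s)).flatten, P x := by
  intro x hx
  obtain ⟨B, hB, hx⟩ := List.mem_flatten.1 hx
  rw [(List.mem_replicate.1 hB).2, List.mem_cons, List.mem_replicate] at hx
  obtain rfl | ⟨-, rfl⟩ := hx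
  exacts [hL, hs]

theorem dhCount_flatten_replicate_le (hp : 2 ≤ p) (hk : p ≤ k) {L s : ℝ}
    (hL : L ∈ Ico (1 / (p : ℝ)) (1 / ((p : ℝ) - 1)))
    (hs : s ∈ Ioo (1 / ((p : ℝ) + 1)) (1 / p)) (m : ℕ) :
    (dhCount k (List.replicate m (L :: List.replicate (p - 1) s)).flatten : ℝ)
      ≤ ((p : ℝ) ^ 2 + 1) / ((p : ℝ) * ((p : ℝ) + 1)) * m := by
  have hsL : s < L := hs.2.trans_le hL.1
  have hI := forall_mem_flatten_replicate
    (P := (· ∈ Ioo (1 / ((p : ℝ) + 1)) (1 / ((p : ℝ) - 1))))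
    ⟨hs.1.trans hsL, hL.2⟩ ⟨hs.1, hsL.trans hL.2⟩ m (p - 1)
  rw [dhCount_eq hp hk hI]
  simp only [List.countP_flatten, List.map_replicate, List.sum_replicate, List.countP_cons,
    List.countP_replicate, decide_eq_true_eq, if_pos hL.1, if_neg hs.2.not_ge, if_neg hL.1.not_gt,
    if_pos hs.2, smul_eq_mul, zero_add, add_zero, mul_one]
  have hp1 : ((p - 1 : ℕ) : ℝ) = p - 1 := Nat.cast_pred (by omega)
  have hp0 : (0 : ℝ) < p := by positivity
  push_cast
  calc ((m / p : ℕ) : ℝ) + ((m * (p - 1) / (p + 1) : ℕ) : ℝ)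
      ≤ (m : ℝ) / p + (m * (p - 1) : ℕ) / ((p + 1 : ℕ) : ℝ) :=
        add_le_add Nat.cast_div_le Nat.cast_div_le
    _ = ((p : ℝ) ^ 2 + 1) / ((p : ℝ) * ((p : ℝ) + 1)) * m := by
        push_cast [hp1]
        field_simp
        ring

end Harmonic

theorem le_one_div_sub_one_of_unique_reciprocal {p : ℕ} {a b : ℝ} (hp : 2 ≤ p)
    (hsub : Ioo a b ⊆ Ioo 0 1) (ha : a < 1 / p)
    (honly : ∀ l : ℕ, 2 ≤ l → 1 / (l : ℝ) ∈ Ioo a b → l = p) :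
    b ≤ 1 / ((p : ℝ) - 1) := by
  by_contra! hb
  have hp1 : ((p - 1 : ℕ) : ℝ) = p - 1 := Nat.cast_pred (by omega)
  have hmem : 1 / ((p - 1 : ℕ) : ℝ) ∈ Ioo a b := by
    rw [hp1]
    refine ⟨ha.trans (one_div_lt_one_div_of_lt ?_ (by linarith)), hb⟩
    have : (2 : ℝ) ≤ p := by exact_mod_cast hp
    linarith
  rcases (show p = 2 ∨ 2 ≤ p - 1 by omega) with rfl | hp2
  · norm_num at hsub hmem
    exact (hsub hmem).2.false
  · have := honly (p - 1) hp2 hmem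
    omega

theorem exists_covering_pair {p : ℕ} {a b : ℝ} (hp : 2 ≤ p) (ha : a < 1 / p)
    (hb : 1 / p < b) :
    ∃ L s : ℝ, L ∈ Ioo (1 / (p : ℝ)) b ∧ s ∈ Ioo a (1 / (p : ℝ)) ∧
      1 ≤ L + (p - 1) * s := by
  have hp1 : (1 : ℝ) < p := by exact_mod_cast hp
  obtain ⟨L, hL⟩ := exists_between hb
  have hbound : (1 - L) / (p - 1) < 1 / p := by
    rw [div_lt_iff₀ (by linarith), one_div_mul_eq_div, sub_div, div_self (by positivity)]
    linarith [hL.1]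
  obtain ⟨s, hs, hsp⟩ := exists_between (max_lt ha hbound)
  refine ⟨L, s, hL, ⟨(le_max_left _ _).trans_lt hs, hsp⟩, ?_⟩
  have := (div_lt_iff₀ (by linarith)).1 ((le_max_right _ _).trans_lt hs)
  linarith

/-- If `(a,b) ⊆ (0,1)` with `1/(p+1) ≤ a < 1/p < b`, `1/p` the only point of the
form `1/l` (integer `l ≥ 2`) in `(a,b)`, and `k ≥ p`, then the competitive ratio
of `DH_k` restricted to item sizes in `(a,b)` equals `(p²+1)/(p(p+1))`. -/
theorem dh_restricted_CR_eq (p k : ℕ) (hp : 2 ≤ p) (hk : p ≤ k) (a b : ℝ)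
    (hsub : Set.Ioo a b ⊆ Set.Ioo (0:ℝ) 1)
    (ha1 : 1/((p:ℝ)+1) ≤ a) (ha2 : a < 1/(p:ℝ)) (hb : 1/(p:ℝ) < b)
    (honly : ∀ l : ℕ, 2 ≤ l → (1/(l:ℝ)) ∈ Set.Ioo a b → l = p) :
    CRrestricted (Set.Ioo a b) (dhCount k) = ((p:ℝ)^2+1)/((p:ℝ)*((p:ℝ)+1)) := by
  have hb' := le_one_div_sub_one_of_unique_reciprocal hp hsub ha2 honly
  have hI : ∀ x ∈ Ioo a b, x ∈ Ioo (1 / ((p : ℝ) + 1)) (1 / ((p : ℝ) - 1)) :=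
    fun x hx => ⟨ha1.trans_lt hx.1, hx.2.trans_le hb'⟩
  obtain ⟨L, s, hL, hs, hcover⟩ := exists_covering_pair hp ha2 hb
  have hLab : L ∈ Ioo a b := ⟨ha2.trans hL.1, hL.2⟩
  have hsab : s ∈ Ioo a b := ⟨hs.1, hs.2.trans hb⟩
  refine CRrestricted_eq_of_bounds (by positivity) ⟨-2, fun I hIS => ?_⟩ fun m =>
    ⟨_, forall_mem_flatten_replicate hLab hsab m (p - 1), le_optCount_flatten_replicate m ?_,
      dhCount_flatten_replicate_le hp hk ⟨hL.1.le, (hI L hLab).2⟩ ⟨(hI s hsab).1, hs.2⟩ m⟩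
  · linarith [mul_optCount_sub_two_le_dhCount hp hk fun x hx => hI x (hIS x hx)]
  · simpa [List.sum_replicate, Nat.cast_pred (show 0 < p by omega)] using hcover
end

section
/- For every integer k ≥ 2, the relative worst order ratio of DH_k to DNF equals 3/2; that is: (i) there is a constant b₁ such that DH_k,W(I) ≤ (3/2)·DNF_W(I) + b₁ for every input sequence I, and (ii) for every c < 3/2 and every constant b there exists an input sequence I with DH_k,W(I) > c·DNF_W(I) + b. -/
open Filter MeasureTheory

noncomputable def halfCappedVol (I : List ℝ) : ℝ := (I.map fun x => min x (1/2)).sum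

lemma halfCappedVol_perm {I J : List ℝ} (h : I.Perm J) : halfCappedVol I = halfCappedVol J :=
  (h.map _).sum_eq

lemma halfCappedVol_eq_sum {I : List ℝ} (h : ∀ x ∈ I, x ≤ 1/2) : halfCappedVol I = I.sum := by
  rw [halfCappedVol, List.map_congr_left fun x hx => min_eq_left (h x hx), List.map_id']

lemma length_div_le_halfCappedVol {I : List ℝ} {j : ℕ} (hj : 2 ≤ j) (h : ∀ x ∈ I, 1/(j:ℝ) ≤ x) :
    (I.length : ℝ) / j ≤ halfCappedVol I := by
  have hj' : (2:ℝ) ≤ j := by exact_mod_cast hj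
  have hjhalf : 1/(j:ℝ) ≤ 1/2 := one_div_le_one_div_of_le two_pos hj'
  calc (I.length : ℝ) / j = (I.map fun _ => 1/(j:ℝ)).sum := by simp; ring
    _ ≤ halfCappedVol I := List.sum_le_sum fun x hx => le_min (h x hx) hjhalf

section worstOf

variable {A : List ℝ → ℕ} {I : List ℝ}

lemma le_worstOf_iff {n : ℕ} : n ≤ worstOf A I ↔ ∀ J, J.Perm I → n ≤ A J := by
  have key : ∀ (P : List (List ℝ)) (a : ℕ),
      n ≤ (P.map A).foldr min a ↔ n ≤ a ∧ ∀ J ∈ P, n ≤ A J := by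
    intro P a
    induction P with
    | nil => simp
    | cons J P ih => simp [ih, and_left_comm]
  simp only [worstOf, key, List.mem_permutations, and_iff_right_iff_imp]
  exact fun h => h I (List.Perm.refl I)

lemma worstOf_le_self : worstOf A I ≤ A I :=
  le_worstOf_iff.1 le_rfl I (List.Perm.refl I)

lemma exists_perm_eq_worstOf : ∃ J, J.Perm I ∧ A J = worstOf A I := by
  have key : ∀ (P : List (List ℝ)) (a : ℕ), (P.map A).foldr min a = a ∨
      ∃ J ∈ P, A J = (P.map A).foldr min a := by
    intro P a
    induction P with
    | nil => simp
    | cons J P ih =>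
      rcases min_choice (A J) ((P.map A).foldr min a) with h | h <;>
        simp only [List.map_cons, List.foldr_cons, h, List.mem_cons, exists_eq_or_imp]
      · simp
      · tauto
  rcases key I.permutations (A I) with h | ⟨J, hJ, h⟩
  · exact ⟨I, List.Perm.refl I, h.symm⟩
  · exact ⟨J, List.mem_permutations.1 hJ, h⟩

end worstOf

section dnf

lemma dnfStep_fst_lt_one (s : ℝ × ℕ) (x : ℝ) : (dnfStep s x).1 < 1 := by
  unfold dnfStep
  split_ifs with h
  · exact one_pos
  · exact not_le.1 h

lemma dnfStep_fst_nonneg {s : ℝ × ℕ} {x : ℝ} (hs : 0 ≤ s.1) (hx : 0 ≤ x) :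
    0 ≤ (dnfStep s x).1 := by
  unfold dnfStep
  split_ifs
  exacts [le_rfl, add_nonneg hs hx]

lemma dnfStep_potential {s : ℝ × ℕ} (hs : s.1 < 1) (x : ℝ) :
    3/2 * (s.2 : ℝ) + s.1 + min x (1/2) ≤ 3/2 * ((dnfStep s x).2 : ℝ) + (dnfStep s x).1 := by
  have := min_le_left x (1/2)
  have := min_le_right x (1/2)
  unfold dnfStep
  split_ifs
  · push_cast; linarith
  · dsimp only; linarith

lemma dnfStep_count_add_fst_le (s : ℝ × ℕ) (x : ℝ) :
    ((dnfStep s x).2 : ℝ) + (dnfStep s x).1 ≤ s.2 + s.1 + x := by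
  unfold dnfStep
  split_ifs
  · push_cast; linarith
  · dsimp only; linarith

lemma foldl_dnfStep_fst_lt_one (J : List ℝ) {s : ℝ × ℕ} (hs : s.1 < 1) :
    (J.foldl dnfStep s).1 < 1 := by
  induction J generalizing s with
  | nil => exact hs
  | cons x J ih => exact ih (dnfStep_fst_lt_one s x)

lemma foldl_dnfStep_fst_nonneg {J : List ℝ} (hJ : ∀ x ∈ J, 0 ≤ x) {s : ℝ × ℕ} (hs : 0 ≤ s.1) :
    0 ≤ (J.foldl dnfStep s).1 := by
  induction J generalizing s with
  | nil => exact hs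
  | cons x J ih =>
    exact ih (fun y hy => hJ y (.tail x hy)) (dnfStep_fst_nonneg hs (hJ x (.head J)))

lemma foldl_dnfStep_potential (J : List ℝ) {s : ℝ × ℕ} (hs : s.1 < 1) :
    3/2 * (s.2 : ℝ) + s.1 + halfCappedVol J ≤
      3/2 * ((J.foldl dnfStep s).2 : ℝ) + (J.foldl dnfStep s).1 := by
  induction J generalizing s with
  | nil => simp [halfCappedVol]
  | cons x J ih =>
    have := dnfStep_potential hs x
    have := ih (dnfStep_fst_lt_one s x)
    simp only [halfCappedVol, List.map_cons, List.sum_cons, List.foldl_cons] at *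
    linarith

lemma foldl_dnfStep_count_add_fst_le (J : List ℝ) (s : ℝ × ℕ) :
    ((J.foldl dnfStep s).2 : ℝ) + (J.foldl dnfStep s).1 ≤ s.2 + s.1 + J.sum := by
  induction J generalizing s with
  | nil => simp
  | cons x J ih =>
    have := dnfStep_count_add_fst_le s x
    have := ih (dnfStep s x)
    simp only [List.sum_cons, List.foldl_cons] at *
    linarith

lemma halfCappedVol_le_dnfCount (J : List ℝ) :
    halfCappedVol J ≤ 3/2 * (dnfCount J : ℝ) + 1 := by
  have := foldl_dnfStep_potential J (s := (0, 0)) one_pos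
  have := foldl_dnfStep_fst_lt_one J (s := (0, 0)) one_pos
  simp only [dnfCount, CharP.cast_eq_zero, mul_zero, add_zero, zero_add] at *
  linarith

lemma dnfCount_le_sum {J : List ℝ} (hJ : ∀ x ∈ J, 0 ≤ x) : (dnfCount J : ℝ) ≤ J.sum := by
  have := foldl_dnfStep_count_add_fst_le J (0, 0)
  have := foldl_dnfStep_fst_nonneg hJ (s := (0, 0)) le_rfl
  simp only [dnfCount, CharP.cast_eq_zero, add_zero, zero_add] at *
  linarith

end dnf

lemma sum_sum_map_filter_le {ι α : Type*} (s : Finset ι) (p : ι → α → Bool) (f : α → ℝ)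
    (l : List α) (hf : ∀ x ∈ l, 0 ≤ f x) (hp : ∀ x ∈ l, (s.filter (p · x)).card ≤ 1) :
    ∑ i ∈ s, ((l.filter (p i)).map f).sum ≤ (l.map f).sum := by
  induction l with
  | nil => simp
  | cons x l ih =>
    have hx : ∑ i ∈ s, (if p i x then f x else 0) ≤ f x := by
      rw [← Finset.sum_filter, Finset.sum_const, nsmul_eq_mul]
      exact mul_le_of_le_one_left (hf x (.head l)) (by exact_mod_cast hp x (.head l))
    have hl := ih (fun y hy => hf y (.tail x hy)) (fun y hy => hp y (.tail x hy))
    have hcons : ∀ i, ((List.filter (p i) (x :: l)).map f).sum =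
        (if p i x then f x else 0) + ((l.filter (p i)).map f).sum := by
      intro i
      by_cases h : p i x <;> simp [h]
    simp only [hcons, Finset.sum_add_distrib, List.map_cons, List.sum_cons]
    linarith

lemma eq_of_mem_harmonic_intervals {i j : ℕ} (hi : 2 ≤ i) (hj : 2 ≤ j) {x : ℝ}
    (hxi : 1/(i:ℝ) ≤ x ∧ x < 1/((i:ℝ)-1)) (hxj : 1/(j:ℝ) ≤ x ∧ x < 1/((j:ℝ)-1)) : i = j := by
  wlog hij : i < j generalizing i j
  · rcases (not_lt.1 hij).lt_or_eq with h | h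
    · exact (this hj hi hxj hxi h).symm
    · exact h.symm
  have hi' : (2:ℝ) ≤ i := by exact_mod_cast hi
  have hij' : (i:ℝ) ≤ j - 1 := by
    have : (i:ℝ) + 1 ≤ j := by exact_mod_cast hij
    linarith
  have : 1/((j:ℝ)-1) ≤ 1/i := one_div_le_one_div_of_le (by linarith) hij'
  linarith [hxi.1, hxj.2]

noncomputable def dhClass (k : ℕ) : Option ℕ → ℝ → Bool
  | none, x => decide (x < 1/(k:ℝ))
  | some j, x => decide ((1:ℝ)/(j:ℝ) ≤ x ∧ x < 1/((j:ℝ)-1))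

lemma card_filter_dhClass_le_one (k : ℕ) (x : ℝ) :
    ((Finset.insertNone (Finset.Icc 2 k)).filter (dhClass k · x)).card ≤ 1 := by
  have small_not_class : ∀ j ∈ Finset.Icc 2 k, x < 1/(k:ℝ) → ¬ 1/(j:ℝ) ≤ x := by
    intro j hj hx hjx
    have hj2 : (2:ℝ) ≤ j := by exact_mod_cast (Finset.mem_Icc.1 hj).1
    have : 1/(k:ℝ) ≤ 1/j :=
      one_div_le_one_div_of_le (by linarith) (by exact_mod_cast (Finset.mem_Icc.1 hj).2)
    linarith
  rw [Finset.card_le_one]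
  intro a ha b hb
  rw [Finset.mem_filter, Finset.mem_insertNone] at ha hb
  cases a <;> cases b <;> simp only [dhClass, decide_eq_true_eq, Option.mem_def, Option.some.injEq,
    forall_eq', reduceCtorEq, IsEmpty.forall_iff, implies_true, true_and] at ha hb ⊢
  · exact small_not_class _ hb.1 ha hb.2.1
  · exact small_not_class _ ha.1 hb ha.2.1
  · exact eq_of_mem_harmonic_intervals (Finset.mem_Icc.1 ha.1).1 (Finset.mem_Icc.1 hb.1).1 ha.2 hb.2

lemma dhCount_le_halfCappedVol {k : ℕ} (hk : 2 ≤ k) {I : List ℝ} (hI : validInput I) :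
    (dhCount k I : ℝ) ≤ halfCappedVol I := by
  have hk' : (2:ℝ) ≤ k := by exact_mod_cast hk
  have harmonic : ∀ j ∈ Finset.Icc 2 k,
      (((I.countP (dhClass k (some j))) / j : ℕ) : ℝ) ≤
        halfCappedVol (I.filter (dhClass k (some j))) := by
    intro j hj
    calc (((I.countP (dhClass k (some j))) / j : ℕ) : ℝ)
        ≤ ((I.filter (dhClass k (some j))).length : ℝ) / j := by
          rw [← List.countP_eq_length_filter]; exact Nat.cast_div_le
      _ ≤ _ := length_div_le_halfCappedVol (Finset.mem_Icc.1 hj).1 fun x hx => by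
          simp only [List.mem_filter, dhClass, decide_eq_true_eq] at hx
          exact hx.2.1
  have small :
      (dnfCount (I.filter (dhClass k none)) : ℝ) ≤ halfCappedVol (I.filter (dhClass k none)) := by
    have hhalf : 1/(k:ℝ) ≤ 1/2 := one_div_le_one_div_of_le two_pos hk'
    have hmem : ∀ x ∈ I.filter (dhClass k none), 0 < x ∧ x < 1/(k:ℝ) := fun x hx => by
      simp only [List.mem_filter, dhClass, decide_eq_true_eq] at hx
      exact ⟨(hI x hx.1).1, hx.2⟩
    rw [halfCappedVol_eq_sum fun x hx => by linarith [hmem x hx]]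
    exact dnfCount_le_sum fun x hx => (hmem x hx).1.le
  calc (dhCount k I : ℝ)
      = ∑ j ∈ Finset.Icc 2 k, (((I.countP (dhClass k (some j))) / j : ℕ) : ℝ)
        + dnfCount (I.filter (dhClass k none)) := by
        simp only [dhCount]; push_cast; rfl
    _ ≤ ∑ j ∈ Finset.Icc 2 k, halfCappedVol (I.filter (dhClass k (some j)))
        + halfCappedVol (I.filter (dhClass k none)) := add_le_add (Finset.sum_le_sum harmonic) small
    _ = ∑ o ∈ Finset.insertNone (Finset.Icc 2 k), halfCappedVol (I.filter (dhClass k o)) := by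
        rw [Finset.sum_insertNone, add_comm]
    _ ≤ halfCappedVol I :=
        sum_sum_map_filter_le _ _ _ I (fun x _ => le_min (hI x ‹_›).1.le one_half_pos.le)
          fun x _ => card_filter_dhClass_le_one k x

lemma worstOf_dhCount_le {k : ℕ} (hk : 2 ≤ k) {I : List ℝ} (hI : validInput I) :
    (worstOf (dhCount k) I : ℝ) ≤ 3/2 * (worstOf dnfCount I : ℝ) + 1 := by
  obtain ⟨J, hJI, hJ⟩ := exists_perm_eq_worstOf (A := dnfCount) (I := I)
  calc (worstOf (dhCount k) I : ℝ)
      ≤ dhCount k I := by exact_mod_cast worstOf_le_self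
    _ ≤ halfCappedVol I := dhCount_le_halfCappedVol hk hI
    _ = halfCappedVol J := halfCappedVol_perm hJI.symm
    _ ≤ 3/2 * (dnfCount J : ℝ) + 1 := halfCappedVol_le_dnfCount J
    _ = 3/2 * (worstOf dnfCount I : ℝ) + 1 := by rw [hJ]

section lowerBound

lemma foldl_dnfStep_replicate {s ℓ : ℝ} (hs : 0 ≤ s) (c m : ℕ) (h : ℓ + m * s < 1) :
    (List.replicate m s).foldl dnfStep (ℓ, c) = (ℓ + m * s, c) := by
  induction m generalizing ℓ with
  | zero => simp
  | succ m ih =>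
    push_cast at h
    have hstep : dnfStep (ℓ, c) s = (ℓ + s, c) :=
      if_neg (by nlinarith [mul_nonneg m.cast_nonneg hs])
    rw [List.replicate_succ, List.foldl_cons, hstep, ih (by linarith)]
    push_cast
    ring_nf

lemma foldl_dnfStep_replicate_append {n : ℕ} {x : ℝ} (hx : 1/((n:ℝ)+1) ≤ x) (c : ℕ) :
    (List.replicate n (1/((n:ℝ)+1)) ++ [x]).foldl dnfStep (0, c) = (0, c + 1) := by
  have hlevel : (n:ℝ) * (1/((n:ℝ)+1)) = 1 - 1/((n:ℝ)+1) := by field_simp; ring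
  rw [List.foldl_append,
    foldl_dnfStep_replicate (by positivity) c n (by rw [hlevel]; simp; positivity)]
  exact if_pos (by rw [hlevel]; linarith)

lemma dnfCount_flatten_replicate {B : List ℝ} (hB : ∀ c, B.foldl dnfStep (0, c) = (0, c + 1))
    (L : ℕ) : dnfCount (List.replicate L B).flatten = L := by
  suffices h : ∀ c, (List.replicate L B).flatten.foldl dnfStep (0, c) = (0, c + L) by
    simp [dnfCount, h]
  induction L with
  | zero => simp
  | succ L ih =>
    intro c
    rw [List.replicate_succ, List.flatten_cons, List.foldl_append, hB, ih, add_right_comm,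
      add_assoc]

lemma dnfCount_replicate_one_div (n m : ℕ) :
    dnfCount (List.replicate (m * (n + 1)) (1/((n:ℝ)+1))) = m := by
  rw [← List.flatten_replicate_replicate]
  refine dnfCount_flatten_replicate (fun c => ?_) m
  rw [List.replicate_succ']
  exact foldl_dnfStep_replicate_append le_rfl c

noncomputable def lowerBoundInput (n L : ℕ) : List ℝ :=
  (List.replicate L (List.replicate n (1/((n:ℝ)+1)) ++ [3/4])).flatten

variable {n : ℕ}

lemma mem_lowerBoundInput {L : ℕ} {x : ℝ} (hx : x ∈ lowerBoundInput n L) :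
    x = 1/((n:ℝ)+1) ∨ x = 3/4 := by
  simp only [lowerBoundInput, List.mem_flatten, List.mem_replicate] at hx
  obtain ⟨_, ⟨-, rfl⟩, hx⟩ := hx
  rw [List.mem_append, List.mem_replicate, List.mem_singleton] at hx
  exact hx.imp_left And.right

lemma validInput_lowerBoundInput (hn : 1 ≤ n) (L : ℕ) : validInput (lowerBoundInput n L) := by
  have hn' : (1:ℝ) ≤ n := by exact_mod_cast hn
  intro x hx
  rcases mem_lowerBoundInput hx with rfl | rfl
  · exact ⟨by positivity, by rw [div_lt_one (by positivity)]; linarith⟩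
  · norm_num

lemma dnfCount_lowerBoundInput (hn : 1 ≤ n) (L : ℕ) : dnfCount (lowerBoundInput n L) = L := by
  have hn' : (1:ℝ) ≤ n := by exact_mod_cast hn
  refine dnfCount_flatten_replicate (fun c => foldl_dnfStep_replicate_append ?_ c) L
  rw [div_le_iff₀ (by positivity)]
  linarith

lemma countP_dhClass_two_lowerBoundInput (k : ℕ) (hn : 2 ≤ n) (L : ℕ) :
    (lowerBoundInput n L).countP (dhClass k (some 2)) = L := by
  have hn' : (2:ℝ) ≤ n := by exact_mod_cast hn
  have hsmall : ¬ (2:ℝ)⁻¹ ≤ ((n:ℝ)+1)⁻¹ := not_le.2 (inv_strictAnti₀ two_pos (by linarith))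
  simp [lowerBoundInput, dhClass, List.countP_flatten, List.countP_replicate, hsmall]
  norm_num

lemma filter_dhClass_none_lowerBoundInput {k : ℕ} (hk : 2 ≤ k) (hkn : k ≤ n) (L : ℕ) :
    (lowerBoundInput n L).filter (dhClass k none) = List.replicate (L * n) (1/((n:ℝ)+1)) := by
  have hk' : (2:ℝ) ≤ k := by exact_mod_cast hk
  have hkn' : (k:ℝ) ≤ n := by exact_mod_cast hkn
  have hsmall : ((n:ℝ)+1)⁻¹ < (k:ℝ)⁻¹ := inv_strictAnti₀ (by linarith) (by linarith)
  have hbig : ¬ (3/4 : ℝ) < (k:ℝ)⁻¹ := by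
    rw [not_lt, inv_le_comm₀ (by linarith) (by norm_num)]; linarith
  simp [lowerBoundInput, dhClass, List.filter_flatten, hsmall, hbig,
    List.flatten_replicate_replicate]

lemma le_dhCount_of_perm_lowerBoundInput {k : ℕ} (hk : 2 ≤ k) (hkn : k ≤ n) (M : ℕ)
    {J : List ℝ} (hJ : J.Perm (lowerBoundInput n (2 * (n + 1) * M))) :
    (3 * n + 1) * M ≤ dhCount k J := by
  have hclass : J.countP (dhClass k (some 2)) / 2 = (n + 1) * M := by
    rw [hJ.countP_eq, countP_dhClass_two_lowerBoundInput k (hk.trans hkn), mul_assoc,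
      Nat.mul_div_cancel_left _ two_pos]
  have hsmall :
      J.filter (dhClass k none) = List.replicate ((2 * n * M) * (n + 1)) (1/((n:ℝ)+1)) := by
    rw [← List.perm_replicate, show 2 * n * M * (n + 1) = 2 * (n + 1) * M * n by ring,
      ← filter_dhClass_none_lowerBoundInput hk hkn]
    exact hJ.filter _
  calc (3 * n + 1) * M
      = J.countP (dhClass k (some 2)) / 2 + dnfCount (J.filter (dhClass k none)) := by
        rw [hclass, hsmall, dnfCount_replicate_one_div]; ring
    _ ≤ dhCount k J :=
        Nat.add_le_add_right (Finset.single_le_sum (f := fun j => J.countP (dhClass k (some j)) / j)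
          (fun _ _ => Nat.zero_le _) (Finset.mem_Icc.2 ⟨le_rfl, hk⟩)) _

end lowerBound

lemma exists_worstOf_dhCount_gt {k : ℕ} (hk : 2 ≤ k) {c : ℝ} (hc : c < 3/2) (b : ℝ) :
    ∃ I : List ℝ, validInput I ∧
      c * (worstOf dnfCount I : ℝ) + b < (worstOf (dhCount k) I : ℝ) := by
  set c' := max c 0
  have hc' : c' < 3/2 := max_lt hc (by norm_num)
  obtain ⟨n₀, hn₀⟩ := exists_nat_gt (2 / (3 - 2 * c'))
  set n := max k n₀
  have hkn : k ≤ n := le_max_left _ _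
  have hgap : 0 < (3 * n + 1 : ℝ) - c' * (2 * (n + 1)) := by
    have : (n₀ : ℝ) ≤ n := by exact_mod_cast le_max_right k n₀
    have := (div_lt_iff₀ (by linarith)).1 (hn₀.trans_le this)
    linarith
  obtain ⟨M, hM⟩ := exists_nat_gt (b / ((3 * n + 1 : ℝ) - c' * (2 * (n + 1))))
  set I := lowerBoundInput n (2 * (n + 1) * M)
  have hdnf : (worstOf dnfCount I : ℝ) ≤ 2 * (n + 1) * M := by
    have := (worstOf_le_self (A := dnfCount) (I := I)).trans_eq
      (dnfCount_lowerBoundInput (by omega) _)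
    exact_mod_cast this
  have hdh : ((3 * n + 1) * M : ℝ) ≤ worstOf (dhCount k) I := by
    exact_mod_cast le_worstOf_iff.2 fun J hJ => le_dhCount_of_perm_lowerBoundInput hk hkn M hJ
  refine ⟨I, validInput_lowerBoundInput (by omega) _, ?_⟩
  have hbM := (div_lt_iff₀ hgap).1 hM
  calc c * (worstOf dnfCount I : ℝ) + b
      ≤ c' * (worstOf dnfCount I : ℝ) + b := by gcongr; exact le_max_left c 0
    _ ≤ c' * (2 * (n + 1) * M) + b := by gcongr
    _ < (3 * n + 1) * M := by linarith
    _ ≤ worstOf (dhCount k) I := hdh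

/-- For every `k ≥ 2`, the relative worst order ratio of `DH_k` to DNF equals `3/2`:
(i) for some constant `b₁`, `DH_{k,W}(I) ≤ (3/2)·DNF_W(I) + b₁` for every input `I`;
(ii) for every `c < 3/2` and every constant `b` there is an input `I` with
`DH_{k,W}(I) > c·DNF_W(I) + b`. -/
theorem dh_dnf_RWOR (k : ℕ) (hk : 2 ≤ k) :
    (∃ b₁ : ℝ, ∀ I : List ℝ, validInput I →
      (worstOf (dhCount k) I : ℝ) ≤ (3/2) * (worstOf dnfCount I : ℝ) + b₁) ∧
    (∀ c : ℝ, c < 3/2 → ∀ b : ℝ, ∃ I : List ℝ, validInput I ∧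
      c * (worstOf dnfCount I : ℝ) + b < (worstOf (dhCount k) I : ℝ)) :=
  ⟨⟨1, fun _ hI => worstOf_dhCount_le hk hI⟩, fun _ hc b => exists_worstOf_dhCount_gt hk hc b⟩
end
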